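/- Let G be a finite simple graph. Then |V(G)| − Z(G) equals the size of a largest persistent triangle of G. -/
import Mathlib


/-!  Common definitions: zero forcing (standard, loop, positive semidefinite),
zero-nonzero patterns, triangles, and related graph parameters. -/

variable {V : Type*}

/-- Standard zero forcing rule: with filled set `S`, the filled vertex `v` can force
its unique unfilled neighbor `u`. -/
def StdForce (G : SimpleGraph V) (S : Set V) (v u : V) : Prop :=
  v ∈ S ∧ u ∉ S ∧ G.Adj v u ∧ ∀ w, G.Adj v w → w ∉ S → w = u

/-- Adjacency in the looping of `G` with loops at the vertices in `L`
(a vertex counts as its own neighbor iff it has a loop). -/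
def LoopAdj (G : SimpleGraph V) (L : Set V) (v w : V) : Prop :=
  G.Adj v w ∨ (v = w ∧ v ∈ L)

/-- Loop zero forcing rule (the forcing vertex need not be filled): `v` can force `u`
if `u` is the only unfilled neighbor of `v` in the looping. -/
def LoopForce (G : SimpleGraph V) (L : Set V) (S : Set V) (v u : V) : Prop :=
  u ∉ S ∧ LoopAdj G L v u ∧ ∀ w, LoopAdj G L v w → w ∉ S → w = u

/-- Positive semidefinite zero forcing rule: the filled vertex `v` can force the unfilled
vertex `u` if `u` is the only neighbor of `v` in the connected component of `u` of the
subgraph induced by the unfilled vertices. -/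
def PsdForce (G : SimpleGraph V) (S : Set V) (v u : V) : Prop :=
  v ∈ S ∧ u ∉ S ∧ G.Adj v u ∧
    ∀ w, G.Adj v w → w ∉ S →
      Relation.ReflTransGen (fun a b => G.Adj a b ∧ a ∉ S ∧ b ∉ S) u w → w = u

/-- The vertices performing a force in a forcing sequence. -/
def sourcesOf (seq : List (V × V)) : Set V := {v | ∃ p ∈ seq, p.1 = v}

/-- The vertices that get forced in a forcing sequence. -/
def targetsOf (seq : List (V × V)) : Set V := {u | ∃ p ∈ seq, p.2 = u}

/-- The filled set after performing all forces of `seq` starting from `F`. -/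
def filledAfter (F : Set V) (seq : List (V × V)) : Set V := F ∪ targetsOf seq

/-- `ValidSeq rule seq F`: starting with `F` as the filled set, the sequence of forces
`seq` is permitted (each force in turn is allowed by `rule`, and each vertex forces
at most once). -/
def ValidSeq (rule : Set V → V → V → Prop) : List (V × V) → Set V → Prop
  | [], _ => True
  | (v, u) :: rest, F => rule F v u ∧ (∀ p ∈ rest, p.1 ≠ v) ∧ ValidSeq rule rest (insert u F)

/-- `F` is a zero forcing set w.r.t. the forcing rule `rule`. -/
def IsZFSet (rule : Set V → V → V → Prop) (F : Set V) : Prop :=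
  ∃ seq : List (V × V), ValidSeq rule seq F ∧ filledAfter F seq = Set.univ

/-- `F` is a zero forcing set (w.r.t. `rule`) from which `R` can be the set of vertices
that force: some (automatically complete) forcing sequence from `F` fills every vertex
and the set of vertices performing a force is exactly `R`. -/
def ForcesWith (rule : Set V → V → V → Prop) (F R : Set V) : Prop :=
  ∃ seq : List (V × V), ValidSeq rule seq F ∧ filledAfter F seq = Set.univ ∧
    sourcesOf seq = R

/-- The zero forcing number w.r.t. a forcing rule. -/
noncomputable def Znum (rule : Set V → V → V → Prop) : ℕ :=
  sInf {n | ∃ F : Set V, IsZFSet rule F ∧ F.ncard = n}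

/-- The (standard) zero forcing number `Z(G)`. -/
noncomputable def Z (G : SimpleGraph V) : ℕ := Znum (StdForce G)

/-- The zero forcing number of the looping of `G` with loops at `L`. -/
noncomputable def Zloop (G : SimpleGraph V) (L : Set V) : ℕ := Znum (LoopForce G L)

/-- The positive semidefinite zero forcing number `Z₊(G)`. -/
noncomputable def Zplus (G : SimpleGraph V) : ℕ := Znum (PsdForce G)

/-- The enhanced zero forcing number `Ẑ(G)`: the maximum over all loopings of `G` of the
zero forcing number of the looping. -/
noncomputable def Zhat (G : SimpleGraph V) : ℕ := sSup {n | ∃ L : Set V, Zloop G L = n}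

/-- `F` is a direct zero forcing set for `G`: some forcing sequence from `F` fills every
vertex and every vertex that performs a force belongs to `F`. -/
def IsDirectZFSet (G : SimpleGraph V) (F : Set V) : Prop :=
  ∃ seq : List (V × V), ValidSeq (StdForce G) seq F ∧ filledAfter F seq = Set.univ ∧
    sourcesOf seq ⊆ F

/-- The direct zero forcing number `Z_d(G)`. -/
noncomputable def Zd (G : SimpleGraph V) : ℕ :=
  sInf {n | ∃ F : Set V, IsDirectZFSet G F ∧ F.ncard = n}

/-- A zero-nonzero pattern `Y` (entry `Y i j` means the `(i,j)` entry is `*`)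
has a `k × k` submatrix that is a triangle. -/
def HasTriOfSize {ρ γ : Type*} (Y : ρ → γ → Prop) (k : ℕ) : Prop :=
  ∃ (r : Fin k → ρ) (c : Fin k → γ), Function.Injective r ∧ Function.Injective c ∧
    (∀ i, Y (r i) (c i)) ∧ ∀ i j : Fin k, i < j → ¬ Y (r i) (c j)

/-- The triangle number `tri(Y)` of a zero-nonzero pattern. -/
noncomputable def tri {ρ γ : Type*} (Y : ρ → γ → Prop) : ℕ := sSup {k | HasTriOfSize Y k}

/-- Membership in `S_znz(G)`: off the diagonal, the pattern matches the adjacency of `G`. -/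
def InSznz (G : SimpleGraph V) (A : V → V → Prop) : Prop :=
  ∀ i j : V, i ≠ j → (A i j ↔ G.Adj i j)

/-- The zero-nonzero pattern of the looping of `G` with loops at `L`. -/
def loopPattern (G : SimpleGraph V) (L : Set V) : V → V → Prop :=
  fun i j => (i = j ∧ i ∈ L) ∨ (i ≠ j ∧ G.Adj i j)

/-- The submatrix of the pattern `Y` with rows `R` and columns `C` is a triangle:
there are enumerations of `R` and `C` realizing a lower-triangular pattern with `*`
diagonal (in particular `|R| = |C|`). -/
def SubIsTriangle {ρ γ : Type*} (Y : ρ → γ → Prop) (R : Finset ρ) (C : Finset γ) : Prop :=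
  ∃ (k : ℕ) (r : Fin k → ρ) (c : Fin k → γ),
    Function.Injective r ∧ Function.Injective c ∧
    (∀ x : ρ, x ∈ R ↔ ∃ i, r i = x) ∧ (∀ y : γ, y ∈ C ↔ ∃ i, c i = y) ∧
    (∀ i, Y (r i) (c i)) ∧ ∀ i j : Fin k, i < j → ¬ Y (r i) (c j)

/-- `(R, C)` is a persistent triangle of `G`. -/
def PersistentTriangle (G : SimpleGraph V) (R C : Finset V) : Prop :=
  ∀ A : V → V → Prop, InSznz G A → SubIsTriangle A R C

/-- `F` is a direct zero forcing set for `G` from which `R` can be the set of vertices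
that force. -/
def DirectForcesWith (G : SimpleGraph V) (F R : Set V) : Prop :=
  ∃ seq : List (V × V), ValidSeq (StdForce G) seq F ∧ filledAfter F seq = Set.univ ∧
    sourcesOf seq = R ∧ R ⊆ F

/-- `(range r, range c)` is a partition of `G` according to the `m × n` pattern `Y`,
with labelings given by `r` and `c`. -/
def PartitionAccording (G : SimpleGraph V) {m n : ℕ} (Y : Fin m → Fin n → Prop)
    (r : Fin m → V) (c : Fin n → V) : Prop :=
  Function.Injective r ∧ Function.Injective c ∧ (∀ i j, r i ≠ c j) ∧
    (∀ v : V, (∃ i, r i = v) ∨ (∃ j, c j = v)) ∧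
    ∀ i j, G.Adj (r i) (c j) ↔ Y i j

/-- `F` is a zero forcing set for `G` that forces from `V1` to `V2`. -/
def ForcesFromTo (G : SimpleGraph V) (F V1 V2 : Set V) : Prop :=
  V1 ⊆ F ∧ ∃ seq : List (V × V), ValidSeq (StdForce G) seq F ∧
    filledAfter F seq = Set.univ ∧ sourcesOf seq ⊆ V1 ∧ targetsOf seq ⊆ V2

/-- `(V1, V2)` is a partition of the vertex set of `G` into two cliques. -/
def IsCliquePartition (G : SimpleGraph V) (V1 V2 : Set V) : Prop :=
  Disjoint V1 V2 ∧ V1 ∪ V2 = Set.univ ∧ G.IsClique V1 ∧ G.IsClique V2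

/-- `G` is cobipartite. -/
def Cobipartite (G : SimpleGraph V) : Prop := ∃ V1 V2 : Set V, IsCliquePartition G V1 V2

/-- `G` is the cobipartite graph associated with the pattern `Y`, via labelings `r`, `c`. -/
def CobipAssociated (G : SimpleGraph V) {m n : ℕ} (Y : Fin m → Fin n → Prop)
    (r : Fin m → V) (c : Fin n → V) : Prop :=
  PartitionAccording G Y r c ∧ G.IsClique (Set.range r) ∧ G.IsClique (Set.range c)

/-- `z` is a critical vertex: some optimal forcing sequence neither lets `z` force
nor forces `z`. -/
def Critical (G : SimpleGraph V) (z : V) : Prop :=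
  ∃ (F : Set V) (seq : List (V × V)), F.ncard = Z G ∧ ValidSeq (StdForce G) seq F ∧
    filledAfter F seq = Set.univ ∧ z ∉ sourcesOf seq ∧ z ∉ targetsOf seq

/-- `z` is an uncritical vertex: in every optimal forcing sequence, exactly one of the
following holds: `z` performs a force, or `z` gets forced. -/
def Uncritical (G : SimpleGraph V) (z : V) : Prop :=
  ∀ (F : Set V) (seq : List (V × V)), F.ncard = Z G → ValidSeq (StdForce G) seq F →
    filledAfter F seq = Set.univ → (z ∈ sourcesOf seq ↔ z ∉ targetsOf seq)

/-- The maximum nullity `M(G)` over the field `𝔽`. -/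
noncomputable def Mnum (𝔽 : Type*) [Field 𝔽] [Fintype V] [DecidableEq V]
    (G : SimpleGraph V) : ℕ :=
  sSup {k | ∃ A : Matrix V V 𝔽, A.IsSymm ∧ (∀ i j : V, i ≠ j → (A i j ≠ 0 ↔ G.Adj i j)) ∧
    k = Fintype.card V - A.rank}

/-- The minimum rank `mr_𝔽(Y)` of a zero-nonzero pattern over the field `𝔽`. -/
noncomputable def mr (𝔽 : Type*) [Field 𝔽] {m n : ℕ} (Y : Fin m → Fin n → Prop) : ℕ :=
  sInf {k | ∃ A : Matrix (Fin m) (Fin n) 𝔽, (∀ i j, A i j ≠ 0 ↔ Y i j) ∧ A.rank = k}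

/-- `G` is a `k`-tree: there is a construction ordering of the vertices in which the
first `k+1` vertices form a clique and every later vertex is adjacent among the earlier
vertices to exactly a `k`-clique. -/
def IsKTree (k : ℕ) [Fintype V] (G : SimpleGraph V) : Prop :=
  k + 1 ≤ Fintype.card V ∧ ∃ ord : V ≃ Fin (Fintype.card V),
    (∀ u v : V, (ord u : ℕ) < k + 1 → (ord v : ℕ) < k + 1 → u ≠ v → G.Adj u v) ∧
    ∀ v : V, k + 1 ≤ (ord v : ℕ) →
      G.IsClique {u : V | (ord u : ℕ) < (ord v : ℕ) ∧ G.Adj u v} ∧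
      {u : V | (ord u : ℕ) < (ord v : ℕ) ∧ G.Adj u v}.ncard = k

/-! ### Auxiliary lemmas -/

section AuxPT

variable {V : Type*}

lemma targetsOf_cons (p : V × V) (l : List (V × V)) :
    targetsOf (p :: l) = insert p.2 (targetsOf l) := by
  ext z
  simp only [targetsOf, Set.mem_setOf_eq, List.mem_cons, Set.mem_insert_iff]
  constructor
  · rintro ⟨q, hq | hq, rfl⟩
    · exact Or.inl (by rw [hq])
    · exact Or.inr ⟨q, hq, rfl⟩
  · rintro (rfl | ⟨q, hq, rfl⟩)
    · exact ⟨p, Or.inl rfl, rfl⟩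
    · exact ⟨q, Or.inr hq, rfl⟩

lemma targetsOf_nil : targetsOf ([] : List (V × V)) = ∅ := by
  ext z; simp [targetsOf]

lemma filledAfter_nil (F : Set V) : filledAfter F [] = F := by
  rw [filledAfter, targetsOf_nil, Set.union_empty]

lemma filledAfter_cons (F : Set V) (p : V × V) (l : List (V × V)) :
    filledAfter F (p :: l) = filledAfter (insert p.2 F) l := by
  rw [filledAfter, filledAfter, targetsOf_cons]
  ext z
  simp only [Set.mem_union, Set.mem_insert_iff]
  tauto

lemma validSeq_step {rule : Set V → V → V → Prop} :
    ∀ (seq : List (V × V)) (F : Set V), ValidSeq rule seq F →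
      ∀ i : ℕ, ∀ hi : i < seq.length,
        rule (filledAfter F (seq.take i)) (seq[i].1) (seq[i].2) ∧
        ∀ j : ℕ, ∀ hj : j < seq.length, i < j → seq[i].1 ≠ seq[j].1
  | [], _, _, i, hi => absurd hi (by simp)
  | (v, u) :: rest, F, h, i, hi => by
    obtain ⟨h1, h2, h3⟩ := h
    cases i with
    | zero =>
      refine ⟨by rw [List.take_zero, filledAfter_nil]; exact h1, ?_⟩
      intro j hj hij
      cases j with
      | zero => omega
      | succ j' =>
        simp only [List.getElem_cons_zero, List.getElem_cons_succ]
        have hj' : j' < rest.length := by simpa using hj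
        exact (h2 rest[j'] (List.getElem_mem hj')).symm
    | succ i' =>
      have hi' : i' < rest.length := by simpa using hi
      have IH := validSeq_step rest (insert u F) h3 i' hi'
      constructor
      · rw [List.take_succ_cons, filledAfter_cons]
        simpa using IH.1
      · intro j hj hij
        cases j with
        | zero => omega
        | succ j' =>
          simp only [List.getElem_cons_succ]
          exact IH.2 j' (by simpa using hj) (by omega)

lemma targetsOf_take_subset (seq : List (V × V)) {i j : ℕ} (hij : i ≤ j) :
    targetsOf (seq.take i) ⊆ targetsOf (seq.take j) := by
  rintro z ⟨p, hp, rfl⟩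
  refine ⟨p, ?_, rfl⟩
  have : seq.take i = (seq.take j).take i := by
    rw [List.take_take, min_eq_left hij]
  rw [this] at hp
  exact List.take_subset _ _ hp

lemma filledAfter_take_subset (F : Set V) (seq : List (V × V)) {i j : ℕ} (hij : i ≤ j) :
    filledAfter F (seq.take i) ⊆ filledAfter F (seq.take j) :=
  Set.union_subset_union_right F (targetsOf_take_subset seq hij)

lemma target_mem_targetsOf_take (seq : List (V × V)) {i j : ℕ} (hi : i < seq.length)
    (hij : i < j) : seq[i].2 ∈ targetsOf (seq.take j) := by
  have hlen : i < (seq.take j).length := by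
    rw [List.length_take]; omega
  refine ⟨(seq.take j)[i], List.getElem_mem hlen, ?_⟩
  rw [List.getElem_take]

/-- Forward direction core: a valid forcing sequence yields a persistent triangle whose
column set is the set of forced vertices. -/
lemma forward_persistent (G : SimpleGraph V) (F : Set V) (seq : List (V × V))
    (hv : ValidSeq (StdForce G) seq F) :
    ∃ R C : Finset V, R.card = seq.length ∧ C.card = seq.length ∧
      PersistentTriangle G R C ∧ (↑C : Set V) = targetsOf seq := by
  classical
  set k := seq.length with hk
  have hstep := fun (i : ℕ) (hi : i < k) => (validSeq_step seq F hv i hi).1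
  have hsrc := fun (i : ℕ) (hi : i < k) => (validSeq_step seq F hv i hi).2
  have hSin : ∀ i (hi : i < k), seq[i].1 ∈ filledAfter F (seq.take i) :=
    fun i hi => (hstep i hi).1
  have hTnotin : ∀ i (hi : i < k), seq[i].2 ∉ filledAfter F (seq.take i) :=
    fun i hi => (hstep i hi).2.1
  have hadj : ∀ i (hi : i < k), G.Adj seq[i].1 seq[i].2 :=
    fun i hi => (hstep i hi).2.2.1
  have hdiagne : ∀ i (hi : i < k), seq[i].1 ≠ seq[i].2 :=
    fun i hi => fun he => hTnotin i hi (he ▸ hSin i hi)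
  have key : ∀ i j (hi : i < k) (hj : j < k), i < j →
      seq[i].2 ≠ seq[j].2 ∧ seq[i].1 ≠ seq[j].2 ∧ ¬ G.Adj seq[i].1 seq[j].2 := by
    intro i j hi hj hij
    have hji : seq[j].2 ∉ filledAfter F (seq.take j) := hTnotin j hj
    have hsubI : filledAfter F (seq.take i) ⊆ filledAfter F (seq.take j) :=
      filledAfter_take_subset F seq (le_of_lt hij)
    have h1 : seq[i].2 ≠ seq[j].2 := by
      intro he
      exact hji (he ▸ Set.mem_union_right _ (target_mem_targetsOf_take seq hi hij))
    have hnotinI : seq[j].2 ∉ filledAfter F (seq.take i) := fun h => hji (hsubI h)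
    have h2 : seq[i].1 ≠ seq[j].2 := fun he => hnotinI (he ▸ hSin i hi)
    refine ⟨h1, h2, fun ha => h1 ?_⟩
    exact ((hstep i hi).2.2.2 seq[j].2 ha hnotinI).symm
  set r : Fin k → V := fun i => seq[(i : ℕ)].1 with hr
  set c : Fin k → V := fun i => seq[(i : ℕ)].2 with hc
  have hrinj : Function.Injective r := by
    intro a b hab
    by_contra hne
    have hne' : (a : ℕ) ≠ (b : ℕ) := fun h => hne (Fin.ext h)
    rcases Nat.lt_or_ge (a : ℕ) (b : ℕ) with h | h
    · exact hsrc a a.isLt b b.isLt h hab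
    · exact hsrc b b.isLt a a.isLt (by omega) hab.symm
  have hcinj : Function.Injective c := by
    intro a b hab
    by_contra hne
    have hne' : (a : ℕ) ≠ (b : ℕ) := fun h => hne (Fin.ext h)
    rcases Nat.lt_or_ge (a : ℕ) (b : ℕ) with h | h
    · exact (key a b a.isLt b.isLt h).1 hab
    · exact (key b a b.isLt a.isLt (by omega)).1 hab.symm
  refine ⟨Finset.image r Finset.univ, Finset.image c Finset.univ, ?_, ?_, ?_, ?_⟩
  · rw [Finset.card_image_of_injective _ hrinj, Finset.card_univ, Fintype.card_fin]
  · rw [Finset.card_image_of_injective _ hcinj, Finset.card_univ, Fintype.card_fin]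
  · intro A hA
    refine ⟨k, r, c, hrinj, hcinj, ?_, ?_, ?_, ?_⟩
    · intro x; simp [Finset.mem_image]
    · intro y; simp [Finset.mem_image]
    · intro i
      exact (hA (r i) (c i) (hdiagne i i.isLt)).mpr (hadj i i.isLt)
    · intro i j hij
      have h := key i j i.isLt j.isLt hij
      exact fun hAx => h.2.2 ((hA (r i) (c j) h.2.1).mp hAx)
  · ext z
    simp only [Finset.coe_image, Finset.coe_univ, Set.image_univ, Set.mem_range,
      targetsOf, Set.mem_setOf_eq]
    constructor
    · rintro ⟨i, rfl⟩
      exact ⟨seq[(i : ℕ)], List.getElem_mem i.isLt, rfl⟩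
    · rintro ⟨p, hp, rfl⟩
      obtain ⟨n, hn, rfl⟩ := List.mem_iff_getElem.mp hp
      exact ⟨⟨n, hn⟩, rfl⟩

/-- Deleting a row with a unique nonzero entry (and the corresponding column)
from a triangle yields a triangle. -/
lemma subIsTriangle_erase [DecidableEq V] (Y : V → V → Prop) {R C : Finset V} {x y : V}
    (h : SubIsTriangle Y R C) (hx : x ∈ R) (hxy : Y x y)
    (huniq : ∀ y' ∈ C, Y x y' → y' = y) :
    SubIsTriangle Y (R.erase x) (C.erase y) := by
  obtain ⟨k, r, c, hrinj, hcinj, hR, hC, hd, hu⟩ := h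
  obtain ⟨p, hp⟩ := (hR x).mp hx
  have hcp : c p = y := huniq (c p) ((hC (c p)).mpr ⟨p, rfl⟩) (hp ▸ hd p)
  cases k with
  | zero => exact p.elim0
  | succ m =>
    refine ⟨m, r ∘ p.succAbove, c ∘ p.succAbove,
      hrinj.comp Fin.succAbove_right_injective,
      hcinj.comp Fin.succAbove_right_injective, ?_, ?_, ?_, ?_⟩
    · intro z
      rw [Finset.mem_erase]
      constructor
      · rintro ⟨hzx, hz⟩
        obtain ⟨i, rfl⟩ := (hR z).mp hz
        have hip : i ≠ p := fun he => hzx (he ▸ hp ▸ rfl)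
        obtain ⟨j, rfl⟩ := Fin.exists_succAbove_eq hip
        exact ⟨j, rfl⟩
      · rintro ⟨j, rfl⟩
        refine ⟨fun he => ?_, (hR _).mpr ⟨_, rfl⟩⟩
        exact Fin.succAbove_ne p j (hrinj (he.trans hp.symm))
    · intro z
      rw [Finset.mem_erase]
      constructor
      · rintro ⟨hzy, hz⟩
        obtain ⟨i, rfl⟩ := (hC z).mp hz
        have hip : i ≠ p := fun he => hzy (he ▸ hcp ▸ rfl)
        obtain ⟨j, rfl⟩ := Fin.exists_succAbove_eq hip
        exact ⟨j, rfl⟩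
      · rintro ⟨j, rfl⟩
        refine ⟨fun he => ?_, (hC _).mpr ⟨_, rfl⟩⟩
        exact Fin.succAbove_ne p j (hcinj (he.trans hcp.symm))
    · intro i; exact hd _
    · intro i j hij
      exact hu _ _ ((Fin.strictMono_succAbove p) hij)

/-- From a persistent triangle, extract a valid first force. -/
lemma persistent_extract [DecidableEq V] (G : SimpleGraph V) {R C : Finset V}
    (hpt : PersistentTriangle G R C) (hCne : C.Nonempty) :
    ∃ x ∈ R, ∃ y ∈ C, x ∉ C ∧ G.Adj x y ∧ ∀ z ∈ C, z ≠ y → ¬ G.Adj x z := by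
  classical
  set A : V → V → Prop := fun i j =>
    (i ≠ j ∧ G.Adj i j) ∨ (i = j ∧ i ∈ C ∧ ∃ w ∈ C, G.Adj i w) with hA
  have hAznz : InSznz G A := by
    intro i j hij
    constructor
    · rintro (⟨_, h⟩ | ⟨h, _⟩)
      · exact h
      · exact absurd h hij
    · exact fun h => Or.inl ⟨hij, h⟩
  obtain ⟨k, r, c, hrinj, hcinj, hR, hC, hd, hu⟩ := hpt A hAznz
  obtain ⟨y0, hy0⟩ := hCne
  obtain ⟨i0, _⟩ := (hC y0).mp hy0
  have hkpos : 0 < k := i0.pos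
  set z : Fin k := ⟨0, hkpos⟩ with hz
  have hzlt : ∀ j : Fin k, j ≠ z → z < j := by
    intro j hj
    have hj0 : (j : ℕ) ≠ 0 := fun h => hj (Fin.ext h)
    have hz0 : (z : ℕ) = 0 := rfl
    rw [Fin.lt_def, hz0]
    omega
  rcases hd z with ⟨hne, hadj⟩ | ⟨heq, hmemC, w, hwC, hadjw⟩
  · -- good case: x = r z, y = c z
    refine ⟨r z, (hR _).mpr ⟨z, rfl⟩, c z, (hC _).mpr ⟨z, rfl⟩, ?_, hadj, ?_⟩
    · intro hmem
      obtain ⟨j, hj⟩ := (hC (r z)).mp hmem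
      have hjz : j ≠ z := by intro he; subst he; exact hne hj.symm
      have := hu z j (hzlt j hjz)
      rw [hj] at this
      exact this (Or.inr ⟨rfl, hmem, c z, (hC _).mpr ⟨z, rfl⟩, hadj⟩)
    · intro zc hzc hzcne hadj'
      obtain ⟨j, hj⟩ := (hC zc).mp hzc
      have hjz : j ≠ z := by intro he; subst he; exact hzcne hj.symm
      have := hu z j (hzlt j hjz)
      rw [hj] at this
      exact this (Or.inl ⟨G.ne_of_adj hadj', hadj'⟩)
  · -- impossible case: r z = c z ∈ C has a neighbor in C
    exfalso
    obtain ⟨j, hj⟩ := (hC w).mp hwC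
    have hjz : j ≠ z := by
      intro he; subst he
      exact G.ne_of_adj hadjw (heq.trans hj)
    have := hu z j (hzlt j hjz)
    rw [hj] at this
    exact this (Or.inl ⟨G.ne_of_adj hadjw, hadjw⟩)

/-- Erasing the extracted force preserves persistence. -/
lemma persistent_erase [DecidableEq V] (G : SimpleGraph V) {R C : Finset V} {x y : V}
    (hpt : PersistentTriangle G R C) (hxR : x ∈ R) (hyC : y ∈ C) (hxC : x ∉ C)
    (hadj : G.Adj x y) (honly : ∀ z ∈ C, z ≠ y → ¬ G.Adj x z) :
    PersistentTriangle G (R.erase x) (C.erase y) := by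
  intro A hA
  refine subIsTriangle_erase A (hpt A hA) hxR ?_ ?_
  · exact (hA x y (fun h => hxC (h ▸ hyC))).mpr hadj
  · intro y' hy' hAy'
    by_contra hne
    have hxy' : x ≠ y' := fun h => hxC (h ▸ hy')
    exact honly y' hy' hne ((hA x y' hxy').mp hAy')

/-- Converse direction core: a persistent triangle yields a forcing sequence from the
complement of its column set. -/
lemma persistent_forces [Fintype V] [DecidableEq V] (G : SimpleGraph V) :
    ∀ (k : ℕ) (R C : Finset V), R.card = k → C.card = k → PersistentTriangle G R C →
      ∃ seq : List (V × V), ValidSeq (StdForce G) seq ((↑C : Set V)ᶜ) ∧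
        filledAfter ((↑C : Set V)ᶜ) seq = Set.univ ∧ ∀ p ∈ seq, p.1 ∈ R := by
  intro k
  induction k with
  | zero =>
    intro R C hR hC _
    rw [Finset.card_eq_zero] at hC
    subst hC
    refine ⟨[], trivial, ?_, by simp⟩
    rw [filledAfter_nil]
    simp
  | succ n IH =>
    intro R C hR hC hpt
    have hCne : C.Nonempty := Finset.card_pos.mp (by omega)
    obtain ⟨x, hxR, y, hyC, hxC, hadj, honly⟩ := persistent_extract G hpt hCne
    have hpt' := persistent_erase G hpt hxR hyC hxC hadj honly
    obtain ⟨seq', hv', hf', hs'⟩ := IH (R.erase x) (C.erase y)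
      (by rw [Finset.card_erase_of_mem hxR, hR]; omega) (by rw [Finset.card_erase_of_mem hyC, hC]; omega) hpt'
    have hsetEq : ((↑(C.erase y) : Set V)ᶜ) = insert y ((↑C : Set V)ᶜ) := by
      ext z
      simp only [Finset.coe_erase, Set.mem_compl_iff, Set.mem_diff, Finset.mem_coe,
        Set.mem_singleton_iff, Set.mem_insert_iff, not_and, not_not]
      by_cases hzy : z = y <;> simp [hzy] <;> tauto
    refine ⟨(x, y) :: seq', ⟨?_, ?_, ?_⟩, ?_, ?_⟩
    · refine ⟨hxC, by simpa using hyC, hadj, ?_⟩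
      intro w hw hwmem
      have hwC : w ∈ C := by simpa using hwmem
      by_contra hne
      exact honly w hwC hne hw
    · intro p hp
      have := hs' p hp
      exact (Finset.mem_erase.mp this).1
    · rw [← hsetEq]; exact hv'
    · rw [filledAfter_cons]
      have : insert (x, y).2 ((↑C : Set V)ᶜ) = ((↑(C.erase y) : Set V)ᶜ) := by
        rw [hsetEq]
      rw [this]
      exact hf'
    · intro p hp
      rcases List.mem_cons.mp hp with rfl | hp'
      · exact hxR
      · exact Finset.erase_subset x R (hs' p hp')

end AuxPT

/-- `|V(G)| − Z(G)` equals the size of a largest persistent triangle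
of `G`. -/
theorem card_sub_Z_eq_max_persistent_triangle
    {V : Type*} [Fintype V] [DecidableEq V] (G : SimpleGraph V) :
    Fintype.card V - Z G =
      sSup {k | ∃ R C : Finset V, R.card = k ∧ C.card = k ∧ PersistentTriangle G R C} := by
  classical
  set S := {k | ∃ R C : Finset V, R.card = k ∧ C.card = k ∧ PersistentTriangle G R C} with hS
  -- S contains 0
  have h0 : 0 ∈ S := by
    refine ⟨∅, ∅, rfl, rfl, ?_⟩
    intro A _
    exact ⟨0, Fin.elim0, Fin.elim0, fun i => i.elim0, fun i => i.elim0,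
      by simp, by simp, fun i => i.elim0, fun i => i.elim0⟩
  -- S is bounded above by |V|
  have hbddV : ∀ m ∈ S, m ≤ Fintype.card V := by
    rintro m ⟨R, C, hR, _, _⟩
    rw [← hR]
    exact Finset.card_le_univ R
  have hbdd : BddAbove S := ⟨Fintype.card V, fun m hm => hbddV m hm⟩
  -- every element of S is at most |V| - Z G
  have hub : ∀ m ∈ S, m ≤ Fintype.card V - Z G := by
    rintro m ⟨R, C, hR, hC, hpt⟩
    obtain ⟨seq, hv, hf, _⟩ := persistent_forces G m R C hR hC hpt
    have hmem : Z G ≤ ((↑C : Set V)ᶜ).ncard := by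
      apply Nat.sInf_le
      exact ⟨((↑C : Set V)ᶜ), ⟨seq, hv, hf⟩, rfl⟩
    have hncard : ((↑C : Set V)ᶜ).ncard = Fintype.card V - m := by
      rw [← Finset.coe_compl, Set.ncard_coe_finset, Finset.card_compl, hC]
    rw [hncard] at hmem
    have := hbddV m ⟨R, C, hR, hC, hpt⟩
    omega
  apply le_antisymm
  · -- |V| - Z G ≤ sSup S
    have hZne : {n | ∃ F : Set V, IsZFSet (StdForce G) F ∧ F.ncard = n}.Nonempty := by
      refine ⟨(Set.univ : Set V).ncard, Set.univ, ⟨[], trivial, ?_⟩, rfl⟩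
      rw [filledAfter_nil]
    have hZmem := Nat.sInf_mem hZne
    obtain ⟨F, ⟨seq, hv, hf⟩, hFcard⟩ := hZmem
    obtain ⟨R, C, hR, hC, hpt, hCtar⟩ := forward_persistent G F seq hv
    have htS : seq.length ∈ S := ⟨R, C, hR, hC, hpt⟩
    have hcardle : Fintype.card V ≤ Z G + seq.length := by
      have huniv : F ∪ (↑C : Set V) = Set.univ := by rw [hCtar]; exact hf
      have h1 : (Set.univ : Set V).ncard ≤ F.ncard + (↑C : Set V).ncard := by
        rw [← huniv]; exact Set.ncard_union_le F _
      rw [Set.ncard_univ, Nat.card_eq_fintype_card, Set.ncard_coe_finset, hC] at h1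
      have hZ : F.ncard = Z G := hFcard
      omega
    have : Fintype.card V - Z G ≤ seq.length := by omega
    exact this.trans (le_csSup hbdd htS)
  · exact csSup_le ⟨0, h0⟩ hub
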